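/- arXiv:1605.01041 — 7 statements merged into one kernel-verified Lean document; each statement's English description precedes it below -/
import Mathlib

section
/- The limiting essential spectrum of a sequence of closed densely defined operators (T_n) acting in closed subspaces H_n of a Hilbert space H_0 is a closed subset of the complex plane. -/
open Filter Topology

noncomputable section

variable {H₀ : Type} [NormedAddCommGroup H₀] [InnerProductSpace ℂ H₀] [CompleteSpace H₀]

/-- Weak convergence `x n ⇀ x₀` in the Hilbert space `H₀`. -/
def WeakTendsto (x : ℕ → H₀) (x₀ : H₀) : Prop :=
  ∀ y : H₀, Tendsto (fun n => (inner ℂ (x n - x₀) y : ℂ)) atTop (nhds 0)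

/-- `P` is the orthogonal projection of `H₀` onto the subspace `Hsp`. -/
def IsOrthProj (Hsp : Submodule ℂ H₀) (P : H₀ →L[ℂ] H₀) : Prop :=
  ∀ x : H₀, P x ∈ Hsp ∧ x - P x ∈ Hspᗮ

/-- The operator `T` with domain `dom` is densely defined in the subspace `Hsp` and maps its
domain into `Hsp`. -/
def ActsIn (Hsp dom : Submodule ℂ H₀) (T : H₀ →ₗ[ℂ] H₀) : Prop :=
  dom ≤ Hsp ∧ dom.topologicalClosure = Hsp ∧ ∀ x ∈ dom, T x ∈ Hsp

/-- The operator `T` with domain `dom` is closed. -/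
def IsClosedOp (dom : Submodule ℂ H₀) (T : H₀ →ₗ[ℂ] H₀) : Prop :=
  ∀ (x : ℕ → H₀) (u v : H₀), (∀ k, x k ∈ dom) →
    Tendsto x atTop (nhds u) → Tendsto (fun k => T (x k)) atTop (nhds v) →
    u ∈ dom ∧ T u = v

/-- `R` is the resolvent `(T - lam)⁻¹` of the operator `T` acting in `Hsp` with domain `dom`,
extended by `0` on the orthogonal complement of `Hsp`. -/
def InResolvent (Hsp dom : Submodule ℂ H₀) (T : H₀ →ₗ[ℂ] H₀) (lam : ℂ)
    (R : H₀ →L[ℂ] H₀) : Prop :=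
  (∀ y ∈ Hsp, R y ∈ dom ∧ T (R y) - lam • R y = y) ∧
  (∀ x ∈ dom, R (T x - lam • x) = x) ∧
  ∀ y ∈ Hspᗮ, R y = 0

/-- `lam` belongs to the resolvent set `ρ(T)`. -/
def InResolventSet (Hsp dom : Submodule ℂ H₀) (T : H₀ →ₗ[ℂ] H₀) (lam : ℂ) : Prop :=
  ∃ R : H₀ →L[ℂ] H₀, InResolvent Hsp dom T lam R

/-- `lam` belongs to the limiting essential spectrum of the sequence `(Tₙ)`. -/
def LimEssSpectrum (domn : ℕ → Submodule ℂ H₀) (Tn : ℕ → H₀ →ₗ[ℂ] H₀) (lam : ℂ) : Prop :=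
  ∃ (φ : ℕ → ℕ) (x : ℕ → H₀), StrictMono φ ∧ (∀ k, x k ∈ domn (φ k)) ∧
    (∀ k, ‖x k‖ = 1) ∧ WeakTendsto x 0 ∧
    Tendsto (fun k => ‖Tn (φ k) (x k) - lam • x k‖) atTop (nhds 0)

/-- `lam` belongs to the limiting essential `eps`-near spectrum of the sequence `(Tₙ)`. -/
def LimEssNear (domn : ℕ → Submodule ℂ H₀) (Tn : ℕ → H₀ →ₗ[ℂ] H₀) (eps : ℝ) (lam : ℂ) :
    Prop :=
  ∃ (φ : ℕ → ℕ) (x : ℕ → H₀), StrictMono φ ∧ (∀ k, x k ∈ domn (φ k)) ∧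
    (∀ k, ‖x k‖ = 1) ∧ WeakTendsto x 0 ∧
    Tendsto (fun k => ‖Tn (φ k) (x k) - lam • x k‖) atTop (nhds eps)

/-- `lam` belongs to the limiting approximate point spectrum of the sequence `(Tₙ)`. -/
def LimApproxSpectrum (domn : ℕ → Submodule ℂ H₀) (Tn : ℕ → H₀ →ₗ[ℂ] H₀) (lam : ℂ) : Prop :=
  ∃ (φ : ℕ → ℕ) (x : ℕ → H₀), StrictMono φ ∧ (∀ k, x k ∈ domn (φ k)) ∧
    (∀ k, ‖x k‖ = 1) ∧
    Tendsto (fun k => ‖Tn (φ k) (x k) - lam • x k‖) atTop (nhds 0)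

/-- `lam` belongs to the essential spectrum of `T`. -/
def EssSpectrum (dom : Submodule ℂ H₀) (T : H₀ →ₗ[ℂ] H₀) (lam : ℂ) : Prop :=
  ∃ x : ℕ → H₀, (∀ k, x k ∈ dom) ∧ (∀ k, ‖x k‖ = 1) ∧ WeakTendsto x 0 ∧
    Tendsto (fun k => ‖T (x k) - lam • x k‖) atTop (nhds 0)

/-- `lam` belongs to the essential `eps`-near spectrum of `T`. -/
def EssNear (dom : Submodule ℂ H₀) (T : H₀ →ₗ[ℂ] H₀) (eps : ℝ) (lam : ℂ) : Prop :=
  ∃ x : ℕ → H₀, (∀ k, x k ∈ dom) ∧ (∀ k, ‖x k‖ = 1) ∧ WeakTendsto x 0 ∧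
    Tendsto (fun k => ‖T (x k) - lam • x k‖) atTop (nhds eps)

/-- `lam` belongs to the approximate point spectrum of `T`. -/
def ApproxSpectrum (dom : Submodule ℂ H₀) (T : H₀ →ₗ[ℂ] H₀) (lam : ℂ) : Prop :=
  ∃ x : ℕ → H₀, (∀ k, x k ∈ dom) ∧ (∀ k, ‖x k‖ = 1) ∧
    Tendsto (fun k => ‖T (x k) - lam • x k‖) atTop (nhds 0)

/-- `lam` belongs to the point spectrum of `T`. -/
def PointSpectrum (dom : Submodule ℂ H₀) (T : H₀ →ₗ[ℂ] H₀) (lam : ℂ) : Prop :=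
  ∃ x ∈ dom, x ≠ 0 ∧ T x = lam • x

/-- `lam` belongs to the `eps`-approximate point spectrum of `T`. -/
def PseudoAppSpectrum (dom : Submodule ℂ H₀) (T : H₀ →ₗ[ℂ] H₀) (eps : ℝ) (lam : ℂ) : Prop :=
  ∃ x ∈ dom, ‖x‖ = 1 ∧ ‖T x - lam • x‖ < eps

/-- `lam` belongs to the spectrum of `T` acting in `Hsp`. -/
def InSpec (Hsp dom : Submodule ℂ H₀) (T : H₀ →ₗ[ℂ] H₀) (lam : ℂ) : Prop :=
  ¬ InResolventSet Hsp dom T lam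

/-- `lam` belongs to the `eps`-pseudospectrum of `T` acting in `Hsp`
(with the convention `‖(T-lam)⁻¹‖ = ∞` on the spectrum). -/
def InPseudoSpec (Hsp dom : Submodule ℂ H₀) (T : H₀ →ₗ[ℂ] H₀) (eps : ℝ) (lam : ℂ) : Prop :=
  (¬ InResolventSet Hsp dom T lam) ∨
    ∃ R : H₀ →L[ℂ] H₀, InResolvent Hsp dom T lam R ∧ 1 / eps < ‖R‖

/-- Generalised strong resolvent convergence `Tₙ → T`. -/
def GSRConv (Hsp dom : Submodule ℂ H₀) (T : H₀ →ₗ[ℂ] H₀)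
    (Hn domn : ℕ → Submodule ℂ H₀) (Tn : ℕ → H₀ →ₗ[ℂ] H₀) : Prop :=
  ∃ (n₀ : ℕ) (lam₀ : ℂ) (R : H₀ →L[ℂ] H₀) (Rn : ℕ → H₀ →L[ℂ] H₀),
    InResolvent Hsp dom T lam₀ R ∧
    (∀ n, n ≥ n₀ → InResolvent (Hn n) (domn n) (Tn n) lam₀ (Rn n)) ∧
    ∀ y : H₀, Tendsto (fun n => Rn n y) atTop (nhds (R y))

/-- Generalised norm resolvent convergence `Tₙ → T`. -/
def GNRConv (Hsp dom : Submodule ℂ H₀) (T : H₀ →ₗ[ℂ] H₀)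
    (Hn domn : ℕ → Submodule ℂ H₀) (Tn : ℕ → H₀ →ₗ[ℂ] H₀) : Prop :=
  ∃ (n₀ : ℕ) (lam₀ : ℂ) (R : H₀ →L[ℂ] H₀) (Rn : ℕ → H₀ →L[ℂ] H₀),
    InResolvent Hsp dom T lam₀ R ∧
    (∀ n, n ≥ n₀ → InResolvent (Hn n) (domn n) (Tn n) lam₀ (Rn n)) ∧
    Tendsto (fun n => ‖Rn n - R‖) atTop (nhds 0)

/-- The sequence of bounded operators `(Bₙ)`, `Bₙ ∈ L(Hₙ)`, is discretely compact: images of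
bounded sequences `xₙ ∈ Hₙ` have subsequences converging in norm to an element of `Hsp`. -/
def DiscretelyCompact (Hsp : Submodule ℂ H₀) (Hn : ℕ → Submodule ℂ H₀)
    (B : ℕ → H₀ →L[ℂ] H₀) : Prop :=
  ∀ (φ : ℕ → ℕ) (x : ℕ → H₀), StrictMono φ → (∀ k, x k ∈ Hn (φ k)) →
    (∃ C : ℝ, ∀ k, ‖x k‖ ≤ C) →
    ∃ (ψ : ℕ → ℕ) (z : H₀), StrictMono ψ ∧ z ∈ Hsp ∧
      Tendsto (fun k => B (φ (ψ k)) (x (ψ k))) atTop (nhds z)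

/-- `S` with domain `domS` is the Hilbert-space adjoint of the densely defined operator `T`
acting in `Hsp` with domain `dom`. -/
def IsAdjointOp (Hsp dom : Submodule ℂ H₀) (T : H₀ →ₗ[ℂ] H₀)
    (domS : Submodule ℂ H₀) (S : H₀ →ₗ[ℂ] H₀) : Prop :=
  domS ≤ Hsp ∧ ∀ y ∈ Hsp, ∀ z ∈ Hsp,
    ((y ∈ domS ∧ S y = z) ↔ ∀ x ∈ dom, (inner ℂ (T x) y : ℂ) = inner ℂ x z)

/-- The sequence of bounded operators `(Aₙ)` converges strongly. -/
def StrongConvSeq (A : ℕ → H₀ →L[ℂ] H₀) : Prop :=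
  ∃ A₀ : H₀ →L[ℂ] H₀, ∀ y : H₀, Tendsto (fun n => A n y) atTop (nhds (A₀ y))

/-- `lam` belongs to the region of boundedness `Δ_b((Tₙ))`. -/
def InRegionOfBoundedness (Hn domn : ℕ → Submodule ℂ H₀) (Tn : ℕ → H₀ →ₗ[ℂ] H₀)
    (lam : ℂ) : Prop :=
  ∃ (n₀ : ℕ) (C : ℝ) (Rn : ℕ → H₀ →L[ℂ] H₀),
    ∀ n, n ≥ n₀ → InResolvent (Hn n) (domn n) (Tn n) lam (Rn n) ∧ ‖Rn n‖ ≤ C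

/-!
Fix a dense sequence `(uᵢ)` in `H₀`. Then `λ` lies in the limiting essential spectrum iff for
every `ε > 0` and all `j, m` there is a unit vector `x ∈ dom(Tₙ)` with `n > m`,
`‖(Tₙ - λ)x‖ < ε` and `|⟪x, uᵢ⟫| < ε` for `i ≤ j`: a diagonal choice with `ε = 1/(j+1)` gives a
sequence that is weakly null because, for bounded sequences, weak convergence only has to be
tested on the dense set. Each of these conditions survives moving `λ` by less than `ε/2` at the
cost of halving `ε`, so the set of such `λ` is closed.
-/

section WeakConvergence

variable {𝕜 E : Type*} [RCLike 𝕜] [NormedAddCommGroup E] [InnerProductSpace 𝕜 E]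

theorem tendsto_inner_zero_of_denseRange {x : ℕ → E} {C : ℝ} (hx : ∀ k, ‖x k‖ ≤ C)
    {u : ℕ → E} (hu : DenseRange u)
    (h : ∀ i, Tendsto (fun k => (inner 𝕜 (x k) (u i) : 𝕜)) atTop (𝓝 0)) (y : E) :
    Tendsto (fun k => (inner 𝕜 (x k) y : 𝕜)) atTop (𝓝 0) := by
  rw [NormedAddGroup.tendsto_nhds_zero]
  intro ε hε
  set C' := max C 1
  have hC' : 0 < C' := lt_of_lt_of_le one_pos (le_max_right _ _)
  obtain ⟨i, hi⟩ := Metric.denseRange_iff.mp hu y (ε / 2 / C') (by positivity)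
  have hi' : C' * ‖y - u i‖ ≤ ε / 2 := by
    rw [← dist_eq_norm]
    exact (le_div_iff₀' hC').mp hi.le
  filter_upwards [(tendsto_zero_iff_norm_tendsto_zero.mp (h i)).eventually
    (eventually_lt_nhds (half_pos hε))] with k hk
  calc ‖(inner 𝕜 (x k) y : 𝕜)‖
      = ‖(inner 𝕜 (x k) (u i) : 𝕜) + inner 𝕜 (x k) (y - u i)‖ := by
        rw [← inner_add_right, add_sub_cancel]
    _ ≤ ‖(inner 𝕜 (x k) (u i) : 𝕜)‖ + ‖x k‖ * ‖y - u i‖ :=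
        (norm_add_le _ _).trans (add_le_add le_rfl (norm_inner_le_norm _ _))
    _ < ε / 2 + C' * ‖y - u i‖ :=
        add_lt_add_of_lt_of_le hk
          (mul_le_mul_of_nonneg_right ((hx k).trans (le_max_left _ _)) (norm_nonneg _))
    _ ≤ ε := by linarith

end WeakConvergence

section LimEssApprox

variable {E : Type} [NormedAddCommGroup E] [InnerProductSpace ℂ E]

def LimEssApprox (u : ℕ → E) (domn : ℕ → Submodule ℂ E) (Tn : ℕ → E →ₗ[ℂ] E) (lam : ℂ) :
    Prop :=
  ∀ ε > 0, ∀ j m : ℕ, ∃ n > m, ∃ x ∈ domn n, ‖x‖ = 1 ∧ ‖Tn n x - lam • x‖ < ε ∧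
    ∀ i ≤ j, ‖(inner ℂ x (u i) : ℂ)‖ < ε

theorem isClosed_setOf_limEssApprox (u : ℕ → E) (domn : ℕ → Submodule ℂ E)
    (Tn : ℕ → E →ₗ[ℂ] E) : IsClosed {lam : ℂ | LimEssApprox u domn Tn lam} := by
  refine isClosed_of_closure_subset fun lam hlam ε hε j m => ?_
  obtain ⟨lam', hlam', hdist⟩ := Metric.mem_closure_iff.mp hlam (ε / 2) (half_pos hε)
  obtain ⟨n, hnm, x, hx, hnorm, hT, hinner⟩ := hlam' (ε / 2) (half_pos hε) j m
  refine ⟨n, hnm, x, hx, hnorm, ?_, fun i hi => (hinner i hi).trans (half_lt_self hε)⟩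
  calc ‖Tn n x - lam • x‖ = ‖(Tn n x - lam' • x) + (lam' - lam) • x‖ := by
        rw [sub_smul]; abel_nf
    _ ≤ ‖Tn n x - lam' • x‖ + ‖lam' - lam‖ :=
        (norm_add_le _ _).trans_eq (by rw [norm_smul, hnorm, mul_one])
    _ < ε / 2 + ε / 2 := by
        rw [dist_comm, dist_eq_norm] at hdist; exact add_lt_add hT hdist
    _ = ε := add_halves ε

variable {domn : ℕ → Submodule ℂ E} {Tn : ℕ → E →ₗ[ℂ] E} {lam : ℂ}

theorem LimEssSpectrum.limEssApprox (h : LimEssSpectrum domn Tn lam) (u : ℕ → E) :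
    LimEssApprox u domn Tn lam := by
  obtain ⟨φ, x, hφ, hdom, hnorm, hweak, htend⟩ := h
  intro ε hε j m
  have hinner : ∀ᶠ k in atTop, ∀ i ∈ Set.Iic j, ‖(inner ℂ (x k) (u i) : ℂ)‖ < ε := by
    refine (eventually_all_finite (Set.finite_Iic j)).mpr fun i _ => ?_
    have hi := tendsto_zero_iff_norm_tendsto_zero.mp (hweak (u i))
    simp only [sub_zero] at hi
    exact hi.eventually (eventually_lt_nhds hε)
  obtain ⟨k, hkm, hkT, hki⟩ := ((hφ.tendsto_atTop.eventually_gt_atTop m).and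
    ((htend.eventually (eventually_lt_nhds hε)).and hinner)).exists
  exact ⟨φ k, hkm, x k, hdom k, hnorm k, hkT, hki⟩

theorem LimEssApprox.limEssSpectrum {u : ℕ → E} (hu : DenseRange u)
    (h : LimEssApprox u domn Tn lam) : LimEssSpectrum domn Tn lam := by
  choose n hn x hdom hnorm hT hinner using
    fun j m : ℕ => h (1 / ((j : ℝ) + 1)) (by positivity) j m
  -- `m j` is the lower bound for the `j`-th index; the chosen index `n j (m j)` is `m (j + 1)`.
  let m : ℕ → ℕ := fun j => Nat.rec 0 (fun j mj => n j mj) j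
  refine ⟨fun j => n j (m j), fun j => x j (m j), strictMono_nat_of_lt_succ fun j => hn _ _,
    fun j => hdom _ _, fun j => hnorm _ _, fun y => ?_, ?_⟩
  · simp only [sub_zero]
    refine tendsto_inner_zero_of_denseRange (fun j => (hnorm j (m j)).le) hu (fun i => ?_) y
    refine squeeze_zero_norm' ?_ tendsto_one_div_add_atTop_nhds_zero_nat
    filter_upwards [eventually_ge_atTop i] with j hj
    exact (hinner j (m j) i hj).le
  · exact squeeze_zero (fun _ => norm_nonneg _) (fun j => (hT j (m j)).le)
      tendsto_one_div_add_atTop_nhds_zero_nat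

end LimEssApprox

theorem stmt0_general [TopologicalSpace.SeparableSpace H₀]
    (domn : ℕ → Submodule ℂ H₀) (Tn : ℕ → H₀ →ₗ[ℂ] H₀)
 :
    IsClosed {lam : ℂ | LimEssSpectrum domn Tn lam} := by
  obtain ⟨u, hu⟩ := TopologicalSpace.exists_dense_seq H₀
  have hset : {lam : ℂ | LimEssSpectrum domn Tn lam} = {lam | LimEssApprox u domn Tn lam} :=
    Set.ext fun _ => ⟨fun h => h.limEssApprox u, fun h => h.limEssSpectrum hu⟩
  exact hset ▸ isClosed_setOf_limEssApprox u domn Tn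

theorem stmt0 [TopologicalSpace.SeparableSpace H₀]
    (Hn domn : ℕ → Submodule ℂ H₀) (Tn : ℕ → H₀ →ₗ[ℂ] H₀)
    (hHncl : ∀ n, IsClosed ((Hn n : Set H₀)))
    (hTn : ∀ n, ActsIn (Hn n) (domn n) (Tn n))
    (hTncl : ∀ n, IsClosedOp (domn n) (Tn n))
 :
    IsClosed {lam : ℂ | LimEssSpectrum domn Tn lam} :=
  stmt0_general domn Tn

end
end

section
/- Let λ_0 ∈ ⋂_n ρ(T_n) and λ ≠ λ_0. Then λ belongs to the limiting essential spectrum of (T_n) if and only if (λ − λ_0)^{-1} belongs to the limiting essential spectrum of the sequence of resolvents ((T_n − λ_0)^{-1}). -/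
/-! Put `μ = (λ - λ₀)⁻¹` and `R = (T - λ₀)⁻¹`. For `x ∈ dom T` one has
`(R - μ)(T - λ₀)x = -μ (T - λ)x`, and for `y ∈ Hₙ` one has `(T - λ)Ry = -(λ - λ₀)(Ry - μy)`.
So `T - λ₀` carries a singular sequence of `(Tₙ)` at `λ` to a sequence nearly annihilated by
`Rₙ - μ`, and `R` carries one back. Each image differs by `o(1)` from a nonzero multiple of the
original unit, weakly null sequence, so it is weakly null with norms tending to a positive limit,
and normalising it gives a singular sequence. -/

open Filter Topology

noncomputable section

variable {H₀ : Type} [NormedAddCommGroup H₀] [InnerProductSpace ℂ H₀] [CompleteSpace H₀]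

section WeylSequences

variable {domn : ℕ → Submodule ℂ H₀} {Sn : ℕ → H₀ →ₗ[ℂ] H₀} {μ : ℂ}

lemma WeakTendsto.smul_of_isBoundedUnder {x : ℕ → H₀} {c : ℕ → ℂ} (hx : WeakTendsto x 0)
    (hc : IsBoundedUnder (· ≤ ·) atTop fun k => ‖c k‖) :
    WeakTendsto (fun k => c k • x k) 0 := by
  intro w
  have hconj : IsBoundedUnder (· ≤ ·) atTop (norm ∘ fun k => starRingEnd ℂ (c k)) := by
    simpa only [Function.comp_def, RCLike.norm_conj] using hc
  simpa only [sub_zero, inner_smul_left] using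
    isBoundedUnder_le_mul_tendsto_zero hconj (by simpa only [sub_zero] using hx w)

lemma WeakTendsto.of_tendsto_norm_sub {x y : ℕ → H₀} (hx : WeakTendsto x 0)
    (hyx : Tendsto (fun k => ‖y k - x k‖) atTop (𝓝 0)) : WeakTendsto y 0 := by
  intro w
  have hdiff : Tendsto (fun k => (inner ℂ (y k - x k) w : ℂ)) atTop (𝓝 0) :=
    squeeze_zero_norm (fun k => norm_inner_le_norm _ _) (by simpa using hyx.mul_const ‖w‖)
  simpa only [sub_zero, inner_sub_left, sub_add_cancel, add_zero] using hdiff.add (hx w)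

lemma tendsto_norm_of_tendsto_norm_sub {ι E : Type*} [SeminormedAddCommGroup E] {l : Filter ι}
    {x y : ι → E} {c : ℝ} (hx : Tendsto (fun k => ‖x k‖) l (𝓝 c))
    (hyx : Tendsto (fun k => ‖y k - x k‖) l (𝓝 0)) :
    Tendsto (fun k => ‖y k‖) l (𝓝 c) := by
  have hdiff : Tendsto (fun k => ‖y k‖ - ‖x k‖) l (𝓝 0) :=
    squeeze_zero_norm (fun k => abs_norm_sub_norm_le _ _) hyx
  simpa using hdiff.add hx

lemma LimEssSpectrum.of_eventually {φ : ℕ → ℕ} {x : ℕ → H₀} (hφ : StrictMono φ)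
    (hx : ∀ᶠ k in atTop, x k ∈ domn (φ k) ∧ ‖x k‖ = 1) (hxw : WeakTendsto x 0)
    (hS : Tendsto (fun k => ‖Sn (φ k) (x k) - μ • x k‖) atTop (𝓝 0)) :
    LimEssSpectrum domn Sn μ := by
  obtain ⟨N, hN⟩ := eventually_atTop.1 hx
  exact ⟨fun k => φ (k + N), fun k => x (k + N), hφ.comp (strictMono_id.add_const N),
    fun k => (hN _ le_add_self).1, fun k => (hN _ le_add_self).2,
    fun w => (hxw w).comp (tendsto_add_atTop_nat N), hS.comp (tendsto_add_atTop_nat N)⟩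

lemma LimEssSpectrum.of_tendsto_norm {φ : ℕ → ℕ} {y : ℕ → H₀} {c : ℝ} (hc : c ≠ 0)
    (hφ : StrictMono φ) (hy : ∀ k, y k ∈ domn (φ k))
    (hyn : Tendsto (fun k => ‖y k‖) atTop (𝓝 c)) (hyw : WeakTendsto y 0)
    (hS : Tendsto (fun k => ‖Sn (φ k) (y k) - μ • y k‖) atTop (𝓝 0)) :
    LimEssSpectrum domn Sn μ := by
  have hinv : Tendsto (fun k => ((‖y k‖ : ℂ))⁻¹) atTop (𝓝 ((c : ℂ))⁻¹) :=
    ((Complex.continuous_ofReal.tendsto c).comp hyn).inv₀ (by exact_mod_cast hc)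
  refine LimEssSpectrum.of_eventually (x := fun k => ((‖y k‖ : ℂ))⁻¹ • y k) hφ ?_
    (hyw.smul_of_isBoundedUnder hinv.norm.isBoundedUnder_le) ?_
  · filter_upwards [hyn.eventually_ne hc] with k hk
    refine ⟨Submodule.smul_mem _ _ (hy k), ?_⟩
    rw [norm_smul, norm_inv, Complex.norm_real, norm_norm, inv_mul_cancel₀ hk]
  · simpa only [map_smul, smul_comm μ, ← smul_sub, norm_smul, mul_zero] using
      hinv.norm.mul hS

lemma LimEssSpectrum.of_tendsto_norm_sub_smul {φ : ℕ → ℕ} {x y : ℕ → H₀} {a : ℂ} (ha : a ≠ 0)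
    (hφ : StrictMono φ) (hx1 : ∀ k, ‖x k‖ = 1) (hxw : WeakTendsto x 0)
    (hy : ∀ k, y k ∈ domn (φ k)) (hyx : Tendsto (fun k => ‖y k - a • x k‖) atTop (𝓝 0))
    (hS : Tendsto (fun k => ‖Sn (φ k) (y k) - μ • y k‖) atTop (𝓝 0)) :
    LimEssSpectrum domn Sn μ := by
  have hax : Tendsto (fun k => ‖a • x k‖) atTop (𝓝 ‖a‖) := by
    simp only [norm_smul, hx1, mul_one, tendsto_const_nhds]
  exact .of_tendsto_norm (norm_ne_zero_iff.2 ha) hφ hy (tendsto_norm_of_tendsto_norm_sub hax hyx)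
    ((hxw.smul_of_isBoundedUnder isBoundedUnder_const).of_tendsto_norm_sub hyx) hS

end WeylSequences

section ResolventIdentities

variable {Hsp dom : Submodule ℂ H₀} {T : H₀ →ₗ[ℂ] H₀} {lam₀ lam : ℂ} {R : H₀ →L[ℂ] H₀}

lemma InResolvent.apply_sub_smul_of_mem_dom (hR : InResolvent Hsp dom T lam₀ R)
    (hne : lam ≠ lam₀) {x : H₀} (hx : x ∈ dom) :
    R (T x - lam₀ • x) - (lam - lam₀)⁻¹ • (T x - lam₀ • x) =
      -(lam - lam₀)⁻¹ • (T x - lam • x) := by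
  rw [hR.2.1 x hx]
  linear_combination (norm := module) -inv_mul_cancel₀ (sub_ne_zero.2 hne) • x

lemma InResolvent.sub_smul_apply_of_mem (hR : InResolvent Hsp dom T lam₀ R)
    (hne : lam ≠ lam₀) {y : H₀} (hy : y ∈ Hsp) :
    T (R y) - lam • R y = -(lam - lam₀) • (R y - (lam - lam₀)⁻¹ • y) := by
  linear_combination (norm := module)
    (hR.1 y hy).2 - mul_inv_cancel₀ (sub_ne_zero.2 hne) • y

end ResolventIdentities

theorem stmt1_general
    (Hn domn : ℕ → Submodule ℂ H₀) (Tn : ℕ → H₀ →ₗ[ℂ] H₀)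
    (hTn : ∀ n, ActsIn (Hn n) (domn n) (Tn n))
    (lam₀ lam : ℂ) (Rn : ℕ → H₀ →L[ℂ] H₀)
    (hres : ∀ n, InResolvent (Hn n) (domn n) (Tn n) lam₀ (Rn n))
    (hne : lam ≠ lam₀) :
    LimEssSpectrum domn Tn lam ↔
      LimEssSpectrum Hn (fun n => (Rn n : H₀ →ₗ[ℂ] H₀)) ((lam - lam₀)⁻¹) := by
  have ha : lam - lam₀ ≠ 0 := sub_ne_zero.2 hne
  constructor
  · rintro ⟨φ, x, hφ, hx, hx1, hxw, hT⟩
    refine .of_tendsto_norm_sub_smul ha hφ hx1 hxw (y := fun k => Tn (φ k) (x k) - lam₀ • x k)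
      (fun k => sub_mem ((hTn _).2.2 _ (hx k)) (Submodule.smul_mem _ _ ((hTn _).1 (hx k)))) ?_ ?_
    · simpa only [sub_smul, sub_sub_sub_cancel_right] using hT
    · simpa only [ContinuousLinearMap.coe_coe, (hres _).apply_sub_smul_of_mem_dom hne (hx _),
        norm_smul, mul_zero] using hT.const_mul ‖-(lam - lam₀)⁻¹‖
  · rintro ⟨φ, v, hφ, hv, hv1, hvw, hR⟩
    refine .of_tendsto_norm_sub_smul (inv_ne_zero ha) hφ hv1 hvw (y := fun k => Rn (φ k) (v k))
      (fun k => ((hres _).1 _ (hv k)).1) hR ?_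
    simpa only [ContinuousLinearMap.coe_coe, (hres _).sub_smul_apply_of_mem hne (hv _),
      norm_smul, mul_zero] using hR.const_mul ‖-(lam - lam₀)‖

theorem stmt1 [TopologicalSpace.SeparableSpace H₀]
    (Hn domn : ℕ → Submodule ℂ H₀) (Tn : ℕ → H₀ →ₗ[ℂ] H₀)
    (hHncl : ∀ n, IsClosed ((Hn n : Set H₀)))
    (hTn : ∀ n, ActsIn (Hn n) (domn n) (Tn n))
    (hTncl : ∀ n, IsClosedOp (domn n) (Tn n))
    (lam₀ lam : ℂ) (Rn : ℕ → H₀ →L[ℂ] H₀)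
    (hres : ∀ n, InResolvent (Hn n) (domn n) (Tn n) lam₀ (Rn n))
    (hne : lam ≠ lam₀) :
    LimEssSpectrum domn Tn lam ↔
      LimEssSpectrum Hn (fun n => (Rn n : H₀ →ₗ[ℂ] H₀)) ((lam - lam₀)⁻¹) :=
  stmt1_general Hn domn Tn hTn lam₀ lam Rn hres hne

end
end

section
/- If T_n converges to T in generalised norm resolvent sense, then the limiting essential spectrum of (T_n) equals the essential spectrum of T. -/
open Filter Topology

noncomputable section

variable {H₀ : Type} [NormedAddCommGroup H₀] [InnerProductSpace ℂ H₀] [CompleteSpace H₀]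

/-
Write `b = λ - λ₀`, where `λ₀` is the common resolvent point. For a Weyl sequence `xₖ` of one side
(`T` or the `Tₙ`) with resolvent `A`, the resolvent identity gives
`xₖ - b A xₖ = A ((S - λ) xₖ) → 0`, and since the resolvents of both sides converge in norm to the
same operator, the same holds with the resolvent `A'` of the other side. This forces `b ≠ 0`
(otherwise `xₖ → 0`), and then `yₖ = A' xₖ = b⁻¹ (xₖ - small)` is weakly null with `‖yₖ‖ → 1/|b|`,
while `(S' - λ) yₖ = P' (xₖ - b yₖ) → 0`. Normalising `yₖ` gives a Weyl sequence for the other side.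
-/

section

variable {E : Type} [NormedAddCommGroup E] [InnerProductSpace ℂ E]

structure IsWeylSeq (D : ℕ → Submodule ℂ E) (S : ℕ → E →ₗ[ℂ] E) (lam : ℂ) (x : ℕ → E) :
    Prop where
  mem : ∀ k, x k ∈ D k
  norm_eq_one : ∀ k, ‖x k‖ = 1
  weak : WeakTendsto x 0
  tendsto : Tendsto (fun k => ‖S k (x k) - lam • x k‖) atTop (𝓝 0)

theorem limEssSpectrum_iff {domn : ℕ → Submodule ℂ E} {Tn : ℕ → E →ₗ[ℂ] E} {lam : ℂ} :
    LimEssSpectrum domn Tn lam ↔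
      ∃ (φ : ℕ → ℕ) (x : ℕ → E), StrictMono φ ∧
        IsWeylSeq (fun k => domn (φ k)) (fun k => Tn (φ k)) lam x :=
  ⟨fun ⟨φ, x, hφ, h₁, h₂, h₃, h₄⟩ => ⟨φ, x, hφ, h₁, h₂, h₃, h₄⟩,
    fun ⟨φ, x, hφ, h₁, h₂, h₃, h₄⟩ => ⟨φ, x, hφ, h₁, h₂, h₃, h₄⟩⟩

theorem essSpectrum_iff {dom : Submodule ℂ E} {T : E →ₗ[ℂ] E} {lam : ℂ} :
    EssSpectrum dom T lam ↔ ∃ x : ℕ → E, IsWeylSeq (fun _ => dom) (fun _ => T) lam x :=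
  ⟨fun ⟨x, h₁, h₂, h₃, h₄⟩ => ⟨x, h₁, h₂, h₃, h₄⟩, fun ⟨x, h₁, h₂, h₃, h₄⟩ => ⟨x, h₁, h₂, h₃, h₄⟩⟩

section WeakTendsto

variable {x d : ℕ → E}

theorem weakTendsto_zero_iff :
    WeakTendsto x 0 ↔ ∀ y, Tendsto (fun k => (inner ℂ (x k) y : ℂ)) atTop (𝓝 0) := by
  simp only [WeakTendsto, sub_zero]

theorem WeakTendsto.sub_of_tendsto (hx : WeakTendsto x 0) (hd : Tendsto d atTop (𝓝 0)) :
    WeakTendsto (x - d) 0 := by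
  rw [weakTendsto_zero_iff] at hx ⊢
  intro y
  simpa [inner_sub_left] using (hx y).sub (hd.inner tendsto_const_nhds (y := y))

theorem WeakTendsto.smul_of_tendsto {a : ℕ → ℂ} {c : ℂ} (ha : Tendsto a atTop (𝓝 c))
    (hx : WeakTendsto x 0) : WeakTendsto (fun k => a k • x k) 0 := by
  rw [weakTendsto_zero_iff] at hx ⊢
  intro y
  convert ((Complex.continuous_conj.tendsto c).comp ha).mul (hx y) using 1
  · simp only [inner_smul_left, Function.comp_apply]
  · rw [mul_zero]

theorem WeakTendsto.comp_add (hx : WeakTendsto x 0) (K : ℕ) :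
    WeakTendsto (fun k => x (k + K)) 0 :=
  fun y => (hx y).comp (tendsto_add_atTop_nat K)

end WeakTendsto

section Normalization

variable {D : ℕ → Submodule ℂ E} {S : ℕ → E →ₗ[ℂ] E} {lam : ℂ}

theorem exists_isWeylSeq_of_eventually {x : ℕ → E}
    (hx : ∀ᶠ k in atTop, x k ∈ D k ∧ ‖x k‖ = 1) (hweak : WeakTendsto x 0)
    (hS : Tendsto (fun k => ‖S k (x k) - lam • x k‖) atTop (𝓝 0)) :
    ∃ K, IsWeylSeq (fun k => D (k + K)) (fun k => S (k + K)) lam (fun k => x (k + K)) := by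
  obtain ⟨K, hK⟩ := eventually_atTop.1 hx
  exact ⟨K, fun k => (hK _ (Nat.le_add_left K k)).1, fun k => (hK _ (Nat.le_add_left K k)).2,
    hweak.comp_add K, hS.comp (tendsto_add_atTop_nat K)⟩

theorem exists_isWeylSeq_of_tendsto_norm {y : ℕ → E} {c : ℝ} (hc : c ≠ 0)
    (hmem : ∀ᶠ k in atTop, y k ∈ D k) (hnorm : Tendsto (fun k => ‖y k‖) atTop (𝓝 c))
    (hweak : WeakTendsto y 0) (hS : Tendsto (fun k => ‖S k (y k) - lam • y k‖) atTop (𝓝 0)) :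
    ∃ K z, IsWeylSeq (fun k => D (k + K)) (fun k => S (k + K)) lam z := by
  set a : ℕ → ℂ := fun k => ((‖y k‖⁻¹ : ℝ) : ℂ)
  have ha : Tendsto a atTop (𝓝 ((c⁻¹ : ℝ) : ℂ)) :=
    (Complex.continuous_ofReal.tendsto _).comp (hnorm.inv₀ hc)
  have hne : ∀ᶠ k in atTop, ‖y k‖ ≠ 0 := hnorm.eventually_ne hc
  have hz : ∀ᶠ k in atTop, a k • y k ∈ D k ∧ ‖a k • y k‖ = 1 := by
    filter_upwards [hmem, hne] with k hk hk'
    exact ⟨(D k).smul_mem _ hk, by simp [a, norm_smul, hk']⟩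
  have hSz : Tendsto (fun k => ‖S k (a k • y k) - lam • a k • y k‖) atTop (𝓝 0) := by
    simp only [map_smul, smul_comm lam (a _), ← smul_sub, norm_smul]
    simpa using ha.norm.mul hS
  obtain ⟨K, hK⟩ := exists_isWeylSeq_of_eventually hz (hweak.smul_of_tendsto ha) hSz
  exact ⟨K, _, hK⟩

end Normalization

section OrthProj

variable {Hsp : Submodule ℂ E} {P : E →L[ℂ] E}

theorem IsOrthProj.apply_eq_self (hP : IsOrthProj Hsp P) {y : E} (hy : y ∈ Hsp) : P y = y := by
  have h : (inner ℂ (y - P y) (y - P y) : ℂ) = 0 :=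
    (Submodule.mem_orthogonal Hsp _).1 (hP y).2 _ (Hsp.sub_mem hy (hP y).1)
  exact (sub_eq_zero.1 (inner_self_eq_zero.1 h)).symm

theorem IsOrthProj.norm_apply_le (hP : IsOrthProj Hsp P) (x : E) : ‖P x‖ ≤ ‖x‖ := by
  have horth : (inner ℂ (P x) (x - P x) : ℂ) = 0 :=
    (Submodule.mem_orthogonal Hsp _).1 (hP x).2 _ (hP x).1
  have h := norm_add_sq_eq_norm_sq_add_norm_sq_of_inner_eq_zero _ _ horth
  rw [add_sub_cancel] at h
  nlinarith [norm_nonneg (P x), norm_nonneg x, mul_self_nonneg ‖x - P x‖]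

end OrthProj

namespace InResolvent

variable {Hsp dom : Submodule ℂ E} {S : E →ₗ[ℂ] E} {lam₀ : ℂ} {R P : E →L[ℂ] E}

theorem apply_sub_smul (hR : InResolvent Hsp dom S lam₀ R) (lam : ℂ) {x : E} (hx : x ∈ dom) :
    R (S x - lam • x) = x - (lam - lam₀) • R x := by
  rw [show S x - lam • x = (S x - lam₀ • x) - (lam - lam₀) • x by rw [sub_smul]; abel,
    map_sub, map_smul, hR.2.1 x hx]

theorem apply_proj (hR : InResolvent Hsp dom S lam₀ R) (hP : IsOrthProj Hsp P) (u : E) :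
    R (P u) = R u := by
  have h := hR.2.2 _ (hP u).2
  rw [map_sub, sub_eq_zero] at h
  exact h.symm

theorem apply_mem (hR : InResolvent Hsp dom S lam₀ R) (hP : IsOrthProj Hsp P) (u : E) :
    R u ∈ dom :=
  hR.apply_proj hP u ▸ (hR.1 _ (hP u).1).1

theorem norm_sub_smul_apply_le (hR : InResolvent Hsp dom S lam₀ R) (hP : IsOrthProj Hsp P)
    (hdom : dom ≤ Hsp) (lam : ℂ) (u : E) :
    ‖S (R u) - lam • R u‖ ≤ ‖u - (lam - lam₀) • R u‖ := by
  have heq := (hR.1 _ (hP u).1).2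
  rw [hR.apply_proj hP] at heq
  have h : S (R u) - lam • R u = P (u - (lam - lam₀) • R u) := by
    rw [map_sub, map_smul, hP.apply_eq_self (hdom (hR.apply_mem hP u)), ← heq, sub_smul]
    abel
  rw [h]
  exact hP.norm_apply_le _

end InResolvent

namespace IsWeylSeq

variable {H₁ D₁ H₂ D₂ : ℕ → Submodule ℂ E} {S₁ S₂ : ℕ → E →ₗ[ℂ] E}
  {P₂ A₁ A₂ : ℕ → E →L[ℂ] E} {R₀ : E →L[ℂ] E} {lam lam₀ : ℂ} {x : ℕ → E}

theorem tendsto_sub_smul_resolvent (hx : IsWeylSeq D₁ S₁ lam x)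
    (hA₁ : ∀ᶠ k in atTop, InResolvent (H₁ k) (D₁ k) (S₁ k) lam₀ (A₁ k))
    (h₁ : Tendsto A₁ atTop (𝓝 R₀)) (h₂ : Tendsto A₂ atTop (𝓝 R₀)) :
    Tendsto (fun k => x k - (lam - lam₀) • A₂ k (x k)) atTop (𝓝 0) := by
  have hres : Tendsto (fun k => x k - (lam - lam₀) • A₁ k (x k)) atTop (𝓝 0) := by
    have h : Tendsto (fun k => A₁ k (S₁ k (x k) - lam • x k)) atTop (𝓝 0) := by
      refine squeeze_zero_norm (fun k => (A₁ k).le_opNorm _) ?_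
      simpa using h₁.norm.mul hx.tendsto
    refine h.congr' ?_
    filter_upwards [hA₁] with k hk using hk.apply_sub_smul lam (hx.mem k)
  have hdiff : Tendsto (fun k => (A₁ k - A₂ k) (x k)) atTop (𝓝 0) := by
    refine squeeze_zero_norm (a := fun k => ‖A₁ k - A₂ k‖) (fun k => ?_) ?_
    · simpa [hx.norm_eq_one k] using (A₁ k - A₂ k).le_opNorm (x k)
    · simpa using (h₁.sub h₂).norm
  convert hres.add (hdiff.const_smul (lam - lam₀)) using 2 with k
  · simp only [sub_apply, smul_sub]
    abel
  · simp

theorem exists_of_tendsto_resolvent (hx : IsWeylSeq D₁ S₁ lam x)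
    (hA₁ : ∀ᶠ k in atTop, InResolvent (H₁ k) (D₁ k) (S₁ k) lam₀ (A₁ k))
    (hA₂ : ∀ᶠ k in atTop, InResolvent (H₂ k) (D₂ k) (S₂ k) lam₀ (A₂ k))
    (hP₂ : ∀ k, IsOrthProj (H₂ k) (P₂ k)) (hD₂ : ∀ k, D₂ k ≤ H₂ k)
    (h₁ : Tendsto A₁ atTop (𝓝 R₀)) (h₂ : Tendsto A₂ atTop (𝓝 R₀)) :
    ∃ K z, IsWeylSeq (fun k => D₂ (k + K)) (fun k => S₂ (k + K)) lam z := by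
  set b := lam - lam₀
  set d := fun k => x k - b • A₂ k (x k)
  have hd : Tendsto d atTop (𝓝 0) := hx.tendsto_sub_smul_resolvent hA₁ h₁ h₂
  have hb : b ≠ 0 := by
    intro hb
    have h := tendsto_zero_iff_norm_tendsto_zero.1 hd
    simp only [d, hb, zero_smul, sub_zero, hx.norm_eq_one] at h
    exact one_ne_zero (tendsto_const_nhds_iff.1 h)
  have hy : ∀ k, A₂ k (x k) = b⁻¹ • (x k - d k) := by
    intro k
    simp [d, inv_smul_smul₀ hb]
  have hnorm : Tendsto (fun k => ‖x k - d k‖) atTop (𝓝 1) := by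
    have h : Tendsto (fun k => ‖x k - d k‖ - ‖x k‖) atTop (𝓝 0) := by
      refine squeeze_zero_norm (fun k => ?_) (tendsto_zero_iff_norm_tendsto_zero.1 hd)
      simpa using abs_norm_sub_norm_le (x k - d k) (x k)
    simpa [hx.norm_eq_one] using h.add_const 1
  refine exists_isWeylSeq_of_tendsto_norm (y := fun k => A₂ k (x k)) (c := ‖b‖⁻¹)
    (by simpa using hb) ?_ ?_ ?_ ?_
  · filter_upwards [hA₂] with k hk using hk.apply_mem (hP₂ k) _
  · simpa [hy, norm_smul] using hnorm.const_mul ‖b‖⁻¹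
  · rw [funext hy]
    exact (hx.weak.sub_of_tendsto hd).smul_of_tendsto tendsto_const_nhds
  · refine squeeze_zero' (.of_forall fun k => norm_nonneg _) ?_
      (tendsto_zero_iff_norm_tendsto_zero.1 hd)
    filter_upwards [hA₂] with k hk using hk.norm_sub_smul_apply_le (hP₂ k) (hD₂ k) lam (x k)

end IsWeylSeq

end

theorem stmt3_general
    (Hsp dom : Submodule ℂ H₀) (T : H₀ →ₗ[ℂ] H₀)
    (hT : ActsIn Hsp dom T)
    (Hn domn : ℕ → Submodule ℂ H₀) (Tn : ℕ → H₀ →ₗ[ℂ] H₀)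
    (hTn : ∀ n, ActsIn (Hn n) (domn n) (Tn n))
    (P : H₀ →L[ℂ] H₀) (Pn : ℕ → H₀ →L[ℂ] H₀)
    (hP : IsOrthProj Hsp P) (hPn : ∀ n, IsOrthProj (Hn n) (Pn n))
    (hconv : GNRConv Hsp dom T Hn domn Tn) :
    {lam : ℂ | LimEssSpectrum domn Tn lam} = {lam : ℂ | EssSpectrum dom T lam} := by
  obtain ⟨n₀, lam₀, R, Rn, hR, hRn, hRd⟩ := hconv
  have hRn_tendsto : Tendsto Rn atTop (𝓝 R) := tendsto_iff_norm_sub_tendsto_zero.2 hRd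
  have hRn_ev : ∀ᶠ n in atTop, InResolvent (Hn n) (domn n) (Tn n) lam₀ (Rn n) :=
    eventually_atTop.2 ⟨n₀, hRn⟩
  ext lam
  change LimEssSpectrum domn Tn lam ↔ EssSpectrum dom T lam
  rw [limEssSpectrum_iff, essSpectrum_iff]
  constructor
  · rintro ⟨φ, x, hφ, hx⟩
    obtain ⟨K, z, hz⟩ := hx.exists_of_tendsto_resolvent (H₁ := fun k => Hn (φ k))
      (hφ.tendsto_atTop.eventually hRn_ev) (.of_forall fun _ => hR) (fun _ => hP)
      (fun _ => hT.1) (hRn_tendsto.comp hφ.tendsto_atTop) tendsto_const_nhds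
    exact ⟨z, hz⟩
  · rintro ⟨x, hx⟩
    obtain ⟨K, z, hz⟩ := hx.exists_of_tendsto_resolvent (.of_forall fun _ => hR) hRn_ev hPn
      (fun n => (hTn n).1) tendsto_const_nhds hRn_tendsto
    exact ⟨(· + K), z, strictMono_id.add_const K, hz⟩

theorem stmt3 [TopologicalSpace.SeparableSpace H₀]
    (Hsp dom : Submodule ℂ H₀) (T : H₀ →ₗ[ℂ] H₀)
    (hHcl : IsClosed ((Hsp : Set H₀)))
    (hT : ActsIn Hsp dom T) (hTcl : IsClosedOp dom T)
    (Hn domn : ℕ → Submodule ℂ H₀) (Tn : ℕ → H₀ →ₗ[ℂ] H₀)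
    (hHncl : ∀ n, IsClosed ((Hn n : Set H₀)))
    (hTn : ∀ n, ActsIn (Hn n) (domn n) (Tn n))
    (hTncl : ∀ n, IsClosedOp (domn n) (Tn n))
    (P : H₀ →L[ℂ] H₀) (Pn : ℕ → H₀ →L[ℂ] H₀)
    (hP : IsOrthProj Hsp P) (hPn : ∀ n, IsOrthProj (Hn n) (Pn n))
    (hPconv : ∀ y : H₀, Tendsto (fun n => Pn n y) atTop (nhds (P y)))
    (hconv : GNRConv Hsp dom T Hn domn Tn) :
    {lam : ℂ | LimEssSpectrum domn Tn lam} = {lam : ℂ | EssSpectrum dom T lam} :=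
  stmt3_general Hsp dom T hT Hn domn Tn hTn P Pn hP hPn hconv

end
end

section
/- Let B_n ∈ L(H_n) and B_0 ∈ L(H_0) with B_n* P_n → B_0* strongly. Suppose x_n ∈ H_n, n ∈ I, converge weakly to x ∈ H_0. Then x ∈ H, B_n x_n converges weakly to B_0 x, and B_0 x ∈ H. If moreover the sequence (B_n) is discretely compact, then B_n x_n converges to B_0 x in norm. -/
open Filter Topology

noncomputable section

variable {H₀ : Type} [NormedAddCommGroup H₀] [InnerProductSpace ℂ H₀] [CompleteSpace H₀]

/-!
For `xₙ ∈ Hₙ` one has `⟪xₙ, y⟫ = ⟪xₙ, Pₙ y⟫` and `⟪Bₙ xₙ, y⟫ = ⟪xₙ, Bₙ* Pₙ y⟫`. Pairing a weakly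
convergent sequence with a norm convergent one gives a convergent sequence, so in the limit
`⟪x, y⟫ = ⟪P x, y⟫` (hence `x ∈ H`) and `⟪Bₙ xₙ, y⟫ → ⟪B₀ x, y⟫`; the same argument applied to
`Bₙ xₙ ∈ Hₙ` gives `B₀ x ∈ H`. Under discrete compactness every subsequence of `Bₙ xₙ` has a
norm convergent subsequence, whose limit must be the weak limit `B₀ x`.
-/

open scoped InnerProductSpace

theorem Filter.tendsto_of_strictMono_subseq {X : Type*} {u : ℕ → X}
    {l : Filter X} (h : ∀ σ : ℕ → ℕ, StrictMono σ → ∃ ψ : ℕ → ℕ, Tendsto (u ∘ σ ∘ ψ) atTop l) :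
    Tendsto u atTop l := by
  refine tendsto_of_subseq_tendsto fun ns hns => ?_
  obtain ⟨σ, -, hσ⟩ := strictMono_subseq_of_tendsto_atTop hns
  obtain ⟨ψ, hψ⟩ := h (ns ∘ σ) hσ
  exact ⟨σ ∘ ψ, hψ⟩

variable {E : Type} [NormedAddCommGroup E] [InnerProductSpace ℂ E]

namespace IsOrthProj

variable {Hsp : Submodule ℂ E} {P : E →L[ℂ] E}

theorem inner_map_left (hP : IsOrthProj Hsp P) (a b : E) : ⟪P a, b⟫_ℂ = ⟪a, P b⟫_ℂ := by
  have hb : ⟪P a, b - P b⟫_ℂ = 0 := Submodule.inner_right_of_mem_orthogonal (hP a).1 (hP b).2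
  have ha : ⟪a - P a, P b⟫_ℂ = 0 := Submodule.inner_left_of_mem_orthogonal (hP b).1 (hP a).2
  rw [inner_sub_right, sub_eq_zero] at hb
  rw [inner_sub_left, sub_eq_zero] at ha
  rw [hb, ha]

theorem map_eq_self (hP : IsOrthProj Hsp P) {a : E} (ha : a ∈ Hsp) : P a = a := by
  have hmem : a - P a ∈ Hsp ⊓ Hspᗮ := ⟨Hsp.sub_mem ha (hP a).1, (hP a).2⟩
  rw [Hsp.inf_orthogonal_eq_bot, Submodule.mem_bot, sub_eq_zero] at hmem
  exact hmem.symm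

theorem inner_map_right_of_mem (hP : IsOrthProj Hsp P) {a : E} (ha : a ∈ Hsp) (b : E) :
    ⟪a, P b⟫_ℂ = ⟪a, b⟫_ℂ := by
  rw [← hP.inner_map_left, hP.map_eq_self ha]

end IsOrthProj

namespace WeakTendsto

variable {u : ℕ → E} {a : E}

theorem _root_.weakTendsto_iff_tendsto_inner :
    WeakTendsto u a ↔ ∀ y, Tendsto (fun k => ⟪u k, y⟫_ℂ) atTop (𝓝 ⟪a, y⟫_ℂ) := by
  refine forall_congr' fun y => ?_
  simp only [inner_sub_left]
  exact tendsto_sub_nhds_zero_iff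

theorem tendsto_inner_right (hw : WeakTendsto u a) (y : E) :
    Tendsto (fun k => ⟪u k, y⟫_ℂ) atTop (𝓝 ⟪a, y⟫_ℂ) :=
  weakTendsto_iff_tendsto_inner.1 hw y

theorem _root_.Filter.Tendsto.weakTendsto (hu : Tendsto u atTop (𝓝 a)) : WeakTendsto u a :=
  weakTendsto_iff_tendsto_inner.2 fun _ => hu.inner tendsto_const_nhds

theorem comp (hw : WeakTendsto u a) {σ : ℕ → ℕ} (hσ : Tendsto σ atTop atTop) :
    WeakTendsto (u ∘ σ) a :=
  fun y => (hw y).comp hσ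

theorem unique {b : E} (ha : WeakTendsto u a) (hb : WeakTendsto u b) : a = b :=
  ext_inner_right ℂ fun y =>
    tendsto_nhds_unique (ha.tendsto_inner_right y) (hb.tendsto_inner_right y)

theorem exists_norm_le [CompleteSpace E] (hw : WeakTendsto u a) : ∃ C, ∀ k, ‖u k‖ ≤ C := by
  have hpt : ∀ y, ∃ C, ∀ k, ‖innerSL ℂ (u k) y‖ ≤ C := fun y =>
    let ⟨C, hC⟩ := (hw.tendsto_inner_right y).norm.bddAbove_range
    ⟨C, fun k => hC ⟨k, rfl⟩⟩
  obtain ⟨C, hC⟩ := banach_steinhaus hpt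
  exact ⟨C, fun k => innerSL_apply_norm ℂ (u k) ▸ hC k⟩

theorem tendsto_inner [CompleteSpace E] {v : ℕ → E} {w : E} (hw : WeakTendsto u a)
    (hv : Tendsto v atTop (𝓝 w)) : Tendsto (fun k => ⟪u k, v k⟫_ℂ) atTop (𝓝 ⟪a, w⟫_ℂ) := by
  obtain ⟨C, hC⟩ := hw.exists_norm_le
  have hbound : ∀ k, dist ⟪u k, w⟫_ℂ ⟪u k, v k⟫_ℂ ≤ C * ‖v k - w‖ := fun k =>
    calc dist ⟪u k, w⟫_ℂ ⟪u k, v k⟫_ℂ = ‖⟪u k, v k - w⟫_ℂ‖ := by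
          rw [dist_comm, dist_eq_norm, inner_sub_right]
      _ ≤ ‖u k‖ * ‖v k - w‖ := norm_inner_le_norm _ _
      _ ≤ C * ‖v k - w‖ := by gcongr; exact hC k
  have hsmall : Tendsto (fun k => C * ‖v k - w‖) atTop (𝓝 0) := by
    simpa using (tendsto_iff_norm_sub_tendsto_zero.1 hv).const_mul C
  exact (hw.tendsto_inner_right w).congr_dist (squeeze_zero (fun _ => dist_nonneg) hbound hsmall)

theorem tendsto_of_subseq (hw : WeakTendsto u a)
    (h : ∀ σ : ℕ → ℕ, StrictMono σ →
      ∃ (ψ : ℕ → ℕ) (z : E), StrictMono ψ ∧ Tendsto (u ∘ σ ∘ ψ) atTop (𝓝 z)) :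
    Tendsto u atTop (𝓝 a) := by
  refine tendsto_of_strictMono_subseq fun σ hσ => ?_
  obtain ⟨ψ, z, hψ, hz⟩ := h σ hσ
  have hza : z = a := hz.weakTendsto.unique (hw.comp (hσ.comp hψ).tendsto_atTop)
  exact ⟨ψ, hza ▸ hz⟩

end WeakTendsto

section Approximation

variable [CompleteSpace E] {Hsp : Submodule ℂ E} {Hn : ℕ → Submodule ℂ E} {P : E →L[ℂ] E}
  {Pn : ℕ → E →L[ℂ] E} {φ : ℕ → ℕ} {x : ℕ → E} {xl : E}

theorem mem_of_weakTendsto (hP : IsOrthProj Hsp P) (hPn : ∀ n, IsOrthProj (Hn n) (Pn n))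
    (hPconv : ∀ y, Tendsto (fun n => Pn n y) atTop (𝓝 (P y))) (hφ : Tendsto φ atTop atTop)
    (hx : ∀ k, x k ∈ Hn (φ k)) (hw : WeakTendsto x xl) : xl ∈ Hsp := by
  have hfix : P xl = xl := ext_inner_right ℂ fun y => by
    have hlim := hw.tendsto_inner ((hPconv y).comp hφ)
    simp only [Function.comp_apply, (hPn _).inner_map_right_of_mem (hx _)] at hlim
    rw [hP.inner_map_left]
    exact tendsto_nhds_unique hlim (hw.tendsto_inner_right y)
  exact hfix ▸ (hP xl).1

theorem weakTendsto_map_of_tendsto_adjoint (hPn : ∀ n, IsOrthProj (Hn n) (Pn n))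
    {B : ℕ → E →L[ℂ] E} {B₀ : E →L[ℂ] E} (hB : ∀ n, ∀ x ∈ Hn n, B n x ∈ Hn n)
    (hBadj : ∀ y, Tendsto (fun n => (B n).adjoint (Pn n y)) atTop (𝓝 (B₀.adjoint y)))
    (hφ : Tendsto φ atTop atTop) (hx : ∀ k, x k ∈ Hn (φ k)) (hw : WeakTendsto x xl) :
    WeakTendsto (fun k => B (φ k) (x k)) (B₀ xl) := by
  refine weakTendsto_iff_tendsto_inner.2 fun y => ?_
  have hlim := hw.tendsto_inner ((hBadj y).comp hφ)
  simp only [Function.comp_apply, ContinuousLinearMap.adjoint_inner_right] at hlim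
  simpa only [(hPn _).inner_map_right_of_mem (hB _ _ (hx _))] using hlim

end Approximation

theorem stmt5_general
    (Hsp : Submodule ℂ H₀) (Hn : ℕ → Submodule ℂ H₀)
    (P : H₀ →L[ℂ] H₀) (Pn : ℕ → H₀ →L[ℂ] H₀)
    (hP : IsOrthProj Hsp P) (hPn : ∀ n, IsOrthProj (Hn n) (Pn n))
    (hPconv : ∀ y : H₀, Tendsto (fun n => Pn n y) atTop (nhds (P y)))
    (B : ℕ → H₀ →L[ℂ] H₀) (B₀ : H₀ →L[ℂ] H₀)
    (hB : ∀ n, ∀ x ∈ Hn n, B n x ∈ Hn n)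
    (hBadj : ∀ y : H₀, Tendsto (fun n => (ContinuousLinearMap.adjoint (B n)) (Pn n y)) atTop
      (nhds ((ContinuousLinearMap.adjoint B₀) y)))
    (φ : ℕ → ℕ) (hφ : StrictMono φ) (x : ℕ → H₀) (xl : H₀)
    (hx : ∀ k, x k ∈ Hn (φ k)) (hw : WeakTendsto x xl) :
    xl ∈ Hsp ∧ B₀ xl ∈ Hsp ∧ WeakTendsto (fun k => B (φ k) (x k)) (B₀ xl) ∧
      (DiscretelyCompact Hsp Hn B →
        Tendsto (fun k => B (φ k) (x k)) atTop (nhds (B₀ xl))) := by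
  have hBw := weakTendsto_map_of_tendsto_adjoint hPn hB hBadj hφ.tendsto_atTop hx hw
  refine ⟨mem_of_weakTendsto hP hPn hPconv hφ.tendsto_atTop hx hw,
    mem_of_weakTendsto hP hPn hPconv hφ.tendsto_atTop (fun k => hB _ _ (hx k)) hBw, hBw,
    fun hDC => hBw.tendsto_of_subseq fun σ hσ => ?_⟩
  obtain ⟨C, hC⟩ := hw.exists_norm_le
  obtain ⟨ψ, z, hψ, -, hz⟩ :=
    hDC (φ ∘ σ) (x ∘ σ) (hφ.comp hσ) (fun k => hx (σ k)) ⟨C, fun k => hC (σ k)⟩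
  exact ⟨ψ, z, hψ, hz⟩

theorem stmt5 [TopologicalSpace.SeparableSpace H₀]
    (Hsp : Submodule ℂ H₀) (Hn : ℕ → Submodule ℂ H₀)
    (hHcl : IsClosed ((Hsp : Set H₀))) (hHncl : ∀ n, IsClosed ((Hn n : Set H₀)))
    (P : H₀ →L[ℂ] H₀) (Pn : ℕ → H₀ →L[ℂ] H₀)
    (hP : IsOrthProj Hsp P) (hPn : ∀ n, IsOrthProj (Hn n) (Pn n))
    (hPconv : ∀ y : H₀, Tendsto (fun n => Pn n y) atTop (nhds (P y)))
    (B : ℕ → H₀ →L[ℂ] H₀) (B₀ : H₀ →L[ℂ] H₀)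
    (hB : ∀ n, ∀ x ∈ Hn n, B n x ∈ Hn n)
    (hBadj : ∀ y : H₀, Tendsto (fun n => (ContinuousLinearMap.adjoint (B n)) (Pn n y)) atTop
      (nhds ((ContinuousLinearMap.adjoint B₀) y)))
    (φ : ℕ → ℕ) (hφ : StrictMono φ) (x : ℕ → H₀) (xl : H₀)
    (hx : ∀ k, x k ∈ Hn (φ k)) (hw : WeakTendsto x xl) :
    xl ∈ Hsp ∧ B₀ xl ∈ Hsp ∧ WeakTendsto (fun k => B (φ k) (x k)) (B₀ xl) ∧
      (DiscretelyCompact Hsp Hn B →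
        Tendsto (fun k => B (φ k) (x k)) atTop (nhds (B₀ xl))) :=
  stmt5_general Hsp Hn P Pn hP hPn hPconv B B₀ hB hBadj φ hφ x xl hx hw

end
end

section
/- If there exists λ_0 ∈ ⋂_n ρ(T_n) such that the resolvents ((T_n − λ_0)^{-1}) form a discretely compact sequence and ((T_n* − conj(λ_0))^{-1} P_n) converges strongly, then the limiting essential spectrum of (T_n) is empty. -/
open Filter Topology

noncomputable section

variable {H₀ : Type} [NormedAddCommGroup H₀] [InnerProductSpace ℂ H₀] [CompleteSpace H₀]

/-!
If `λ` were in the limiting essential spectrum, with weakly null unit vectors `xₖ ∈ dom Tₙₖ`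
and `‖(Tₙₖ - λ) xₖ‖ → 0`, then `yₖ = (Tₙₖ - λ₀) xₖ` would be bounded, so by discrete compactness
of the resolvents a subsequence of `xₖ = Rₙₖ yₖ` would converge in norm. A norm limit of a weakly
null sequence is `0`, which contradicts `‖xₖ‖ = 1`.
-/

section

variable {E : Type} [NormedAddCommGroup E] [InnerProductSpace ℂ E]

theorem WeakTendsto.comp_strictMono {x : ℕ → E} {x₀ : E} (hx : WeakTendsto x x₀)
    {ψ : ℕ → ℕ} (hψ : StrictMono ψ) : WeakTendsto (x ∘ ψ) x₀ :=
  fun y => (hx y).comp hψ.tendsto_atTop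

theorem WeakTendsto.eq_of_tendsto {x : ℕ → E} {x₀ z : E} (hweak : WeakTendsto x x₀)
    (hz : Tendsto x atTop (𝓝 z)) : z = x₀ := by
  have hlim : Tendsto (fun n => (inner ℂ (x n - x₀) (z - x₀) : ℂ)) atTop
      (𝓝 (inner ℂ (z - x₀) (z - x₀))) :=
    (hz.sub_const x₀).inner tendsto_const_nhds
  have hzero : (inner ℂ (z - x₀) (z - x₀) : ℂ) = 0 := tendsto_nhds_unique hlim (hweak _)
  exact sub_eq_zero.mp (inner_self_eq_zero.mp hzero)

theorem WeakTendsto.not_tendsto_of_norm_eq_one {x : ℕ → E} (hweak : WeakTendsto x 0)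
    (hnorm : ∀ k, ‖x k‖ = 1) (z : E) : ¬ Tendsto x atTop (𝓝 z) := by
  intro hz
  have hz1 : ‖z‖ = 1 := tendsto_nhds_unique hz.norm (by simp only [hnorm, tendsto_const_nhds])
  rw [hweak.eq_of_tendsto hz, norm_zero] at hz1
  exact zero_ne_one hz1

theorem ActsIn.sub_smul_mem {Hsp dom : Submodule ℂ E} {T : E →ₗ[ℂ] E}
    (hT : ActsIn Hsp dom T) {x : E} (hx : x ∈ dom) (μ : ℂ) : T x - μ • x ∈ Hsp :=
  Hsp.sub_mem (hT.2.2 x hx) (Hsp.smul_mem μ (hT.1 hx))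

theorem exists_bound_norm_sub_smul_of_tendsto {x u : ℕ → E} {lam lam₀ : ℂ} {ε : ℝ}
    (hnorm : ∀ k, ‖x k‖ = 1) (hu : Tendsto (fun k => ‖u k - lam • x k‖) atTop (𝓝 ε)) :
    ∃ C : ℝ, ∀ k, ‖u k - lam₀ • x k‖ ≤ C := by
  obtain ⟨C, hC⟩ := hu.bddAbove_range
  refine ⟨C + ‖lam - lam₀‖, fun k => ?_⟩
  calc ‖u k - lam₀ • x k‖ = ‖(u k - lam • x k) + (lam - lam₀) • x k‖ := by
        rw [sub_smul]; congr 1; abel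
    _ ≤ ‖u k - lam • x k‖ + ‖lam - lam₀‖ := by
        grw [norm_add_le, norm_smul, hnorm k, mul_one]
    _ ≤ C + ‖lam - lam₀‖ := by gcongr; exact hC ⟨k, rfl⟩

theorem DiscretelyCompact.exists_tendsto_of_inResolvent {Hsp : Submodule ℂ E}
    {Hn domn : ℕ → Submodule ℂ E} {Tn : ℕ → E →ₗ[ℂ] E} {lam₀ : ℂ} {Rn : ℕ → E →L[ℂ] E}
    (hdc : DiscretelyCompact Hsp Hn Rn) (hTn : ∀ n, ActsIn (Hn n) (domn n) (Tn n))
    (hres : ∀ n, InResolvent (Hn n) (domn n) (Tn n) lam₀ (Rn n))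
    {φ : ℕ → ℕ} (hφ : StrictMono φ) {x : ℕ → E} (hdom : ∀ k, x k ∈ domn (φ k))
    (hbd : ∃ C : ℝ, ∀ k, ‖Tn (φ k) (x k) - lam₀ • x k‖ ≤ C) :
    ∃ (ψ : ℕ → ℕ) (z : E), StrictMono ψ ∧ Tendsto (x ∘ ψ) atTop (𝓝 z) := by
  obtain ⟨ψ, z, hψ, -, hz⟩ :=
    hdc φ _ hφ (fun k => (hTn (φ k)).sub_smul_mem (hdom k) lam₀) hbd
  refine ⟨ψ, z, hψ, ?_⟩
  simpa only [Function.comp_def, fun k => (hres (φ k)).2.1 _ (hdom k)] using hz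

end

theorem stmt7_general
    (Hsp : Submodule ℂ H₀)
    (Hn domn : ℕ → Submodule ℂ H₀) (Tn : ℕ → H₀ →ₗ[ℂ] H₀)
    (hTn : ∀ n, ActsIn (Hn n) (domn n) (Tn n))
    (lam₀ : ℂ) (Rn : ℕ → H₀ →L[ℂ] H₀)
    (hres : ∀ n, InResolvent (Hn n) (domn n) (Tn n) lam₀ (Rn n))
    (hdc : DiscretelyCompact Hsp Hn Rn) :
    {lam : ℂ | LimEssSpectrum domn Tn lam} = ∅ := by
  refine Set.eq_empty_of_forall_notMem fun lam ⟨φ, x, hφ, hdom, hnorm, hweak, hlim⟩ => ?_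
  obtain ⟨ψ, z, hψ, hz⟩ := hdc.exists_tendsto_of_inResolvent hTn hres hφ hdom
    (exists_bound_norm_sub_smul_of_tendsto hnorm hlim)
  exact (hweak.comp_strictMono hψ).not_tendsto_of_norm_eq_one (fun k => hnorm (ψ k)) z hz

theorem stmt7 [TopologicalSpace.SeparableSpace H₀]
    (Hsp : Submodule ℂ H₀)
    (hHcl : IsClosed ((Hsp : Set H₀)))
    (Hn domn : ℕ → Submodule ℂ H₀) (Tn : ℕ → H₀ →ₗ[ℂ] H₀)
    (hHncl : ∀ n, IsClosed ((Hn n : Set H₀)))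
    (hTn : ∀ n, ActsIn (Hn n) (domn n) (Tn n))
    (hTncl : ∀ n, IsClosedOp (domn n) (Tn n))
    (P : H₀ →L[ℂ] H₀) (Pn : ℕ → H₀ →L[ℂ] H₀)
    (hP : IsOrthProj Hsp P) (hPn : ∀ n, IsOrthProj (Hn n) (Pn n))
    (hPconv : ∀ y : H₀, Tendsto (fun n => Pn n y) atTop (nhds (P y)))
    (lam₀ : ℂ) (Rn : ℕ → H₀ →L[ℂ] H₀)
    (hres : ∀ n, InResolvent (Hn n) (domn n) (Tn n) lam₀ (Rn n))
    (hdc : DiscretelyCompact Hsp Hn Rn)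
    (hadj : StrongConvSeq (fun n => (ContinuousLinearMap.adjoint (Rn n)).comp (Pn n))) :
    {lam : ℂ | LimEssSpectrum domn Tn lam} = ∅ :=
  stmt7_general Hsp Hn domn Tn hTn lam₀ Rn hres hdc

end
end

section
/- Let B_n ∈ L(H_n) be a discretely compact sequence with (B_n* P_n) strongly convergent. Then the limiting essential spectrum of (T_n + B_n) equals the limiting essential spectrum of (T_n). -/
open Filter Topology

noncomputable section

variable {H₀ : Type} [NormedAddCommGroup H₀] [InnerProductSpace ℂ H₀] [CompleteSpace H₀]

/-!
If `xₖ ∈ H_{nₖ}` is a weakly null unit sequence, then `⟪B_{nₖ} xₖ, y⟫ = ⟪xₖ, B_{nₖ}* P_{nₖ} y⟫`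
and `B_{nₖ}* P_{nₖ} y` converges in norm, so `B_{nₖ} xₖ ⇀ 0`. Discrete compactness gives every
subsequence of `B_{nₖ} xₖ` a norm-convergent subsequence, whose limit must be the weak limit `0`;
hence `B_{nₖ} xₖ → 0` in norm, and the Weyl sequences of `(Tₙ)` and `(Tₙ + Bₙ)` coincide.
-/

open scoped InnerProductSpace

section

variable {E : Type} [NormedAddCommGroup E] [InnerProductSpace ℂ E]

lemma IsOrthProj.apply_of_mem {Hsp : Submodule ℂ E} {P : E →L[ℂ] E} (hP : IsOrthProj Hsp P)
    {v : E} (hv : v ∈ Hsp) : P v = v := by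
  have hperp : v - P v ∈ Hspᗮ := (hP v).2
  have hmem : v - P v ∈ Hsp := Hsp.sub_mem hv (hP v).1
  exact (sub_eq_zero.mp (inner_self_eq_zero.mp
    ((Submodule.mem_orthogonal _ _).mp hperp _ hmem))).symm

lemma IsOrthProj.isSymmetric {Hsp : Submodule ℂ E} {P : E →L[ℂ] E} (hP : IsOrthProj Hsp P) :
    (P : E →ₗ[ℂ] E).IsSymmetric := fun a b => by
  have hb : ⟪P a, b - P b⟫_ℂ = 0 := (Submodule.mem_orthogonal _ _).mp (hP b).2 _ (hP a).1
  have ha : ⟪a - P a, P b⟫_ℂ = 0 := (Submodule.mem_orthogonal' _ _).mp (hP a).2 _ (hP b).1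
  rw [inner_sub_right, sub_eq_zero] at hb
  rw [inner_sub_left, sub_eq_zero] at ha
  exact hb.trans ha.symm

lemma IsOrthProj.inner_apply_eq_inner_adjoint_comp [CompleteSpace E] {Hsp : Submodule ℂ E}
    {P : E →L[ℂ] E} (hP : IsOrthProj Hsp P) {B : E →L[ℂ] E} (hB : ∀ x ∈ Hsp, B x ∈ Hsp) {x : E}
    (hx : x ∈ Hsp) (y : E) : ⟪B x, y⟫_ℂ = ⟪x, (ContinuousLinearMap.adjoint B).comp P y⟫_ℂ := by
  rw [← hP.apply_of_mem (hB x hx)]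
  exact (hP.isSymmetric (B x) y).trans (ContinuousLinearMap.adjoint_inner_right B x (P y)).symm

lemma WeakTendsto.inner_tendsto_zero {x : ℕ → E} (hx : WeakTendsto x 0) {C : ℝ}
    (hC : ∀ k, ‖x k‖ ≤ C) {w : ℕ → E} {w₀ : E} (hw : Tendsto w atTop (𝓝 w₀)) :
    Tendsto (fun k => ⟪x k, w k⟫_ℂ) atTop (𝓝 0) := by
  have hlim : Tendsto (fun k => ⟪x k, w₀⟫_ℂ) atTop (𝓝 0) := by simpa using hx w₀
  have hdiff : Tendsto (fun k => ⟪x k, w k - w₀⟫_ℂ) atTop (𝓝 0) := by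
    have hbound : Tendsto (fun k => C * ‖w k - w₀‖) atTop (𝓝 0) := by
      simpa using (tendsto_iff_norm_sub_tendsto_zero.mp hw).const_mul C
    refine squeeze_zero_norm (fun k => ?_) hbound
    calc ‖⟪x k, w k - w₀⟫_ℂ‖ ≤ ‖x k‖ * ‖w k - w₀‖ := norm_inner_le_norm _ _
      _ ≤ C * ‖w k - w₀‖ := by gcongr; exact hC k
  simpa [← inner_add_right] using hlim.add hdiff

lemma WeakTendsto.tendsto_zero_of_subseq {u : ℕ → E} (hu : WeakTendsto u 0)
    (hsub : ∀ ns : ℕ → ℕ, StrictMono ns →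
      ∃ (ms : ℕ → ℕ) (z : E), StrictMono ms ∧ Tendsto (u ∘ ns ∘ ms) atTop (𝓝 z)) :
    Tendsto u atTop (𝓝 0) := by
  refine tendsto_of_subseq_tendsto fun ns hns => ?_
  obtain ⟨ns', hns'_mono, hns'⟩ := strictMono_subseq_of_tendsto_atTop hns
  obtain ⟨ms, z, hms, hz⟩ := hsub (ns ∘ ns') hns'
  have hzero : z = 0 := by
    have hweak : Tendsto (fun k => ⟪u (ns (ns' (ms k))), z⟫_ℂ) atTop (𝓝 0) :=
      (by simpa using hu z : Tendsto (fun n => ⟪u n, z⟫_ℂ) atTop (𝓝 0)).comp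
        ((hns.comp hns'_mono.tendsto_atTop).comp hms.tendsto_atTop)
    exact inner_self_eq_zero.mp (tendsto_nhds_unique (hz.inner tendsto_const_nhds) hweak)
  exact ⟨ns' ∘ ms, hzero ▸ hz⟩

lemma DiscretelyCompact.tendsto_apply_zero [CompleteSpace E] {Hsp : Submodule ℂ E}
    {Hn : ℕ → Submodule ℂ E}
    {Pn : ℕ → E →L[ℂ] E} (hPn : ∀ n, IsOrthProj (Hn n) (Pn n)) {B : ℕ → E →L[ℂ] E}
    (hB : ∀ n, ∀ x ∈ Hn n, B n x ∈ Hn n) (hdc : DiscretelyCompact Hsp Hn B)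
    (hadj : StrongConvSeq (fun n => (ContinuousLinearMap.adjoint (B n)).comp (Pn n)))
    {φ : ℕ → ℕ} (hφ : StrictMono φ) {x : ℕ → E} (hx : ∀ k, x k ∈ Hn (φ k))
    {C : ℝ} (hC : ∀ k, ‖x k‖ ≤ C) (hw : WeakTendsto x 0) :
    Tendsto (fun k => B (φ k) (x k)) atTop (𝓝 0) := by
  obtain ⟨A₀, hA₀⟩ := hadj
  have hBw : WeakTendsto (fun k => B (φ k) (x k)) 0 := fun y => by
    simp only [sub_zero, (hPn _).inner_apply_eq_inner_adjoint_comp (hB _) (hx _)]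
    exact hw.inner_tendsto_zero hC ((hA₀ y).comp hφ.tendsto_atTop)
  refine hBw.tendsto_zero_of_subseq fun ns hns => ?_
  obtain ⟨ms, z, hms, -, hz⟩ :=
    hdc (φ ∘ ns) (x ∘ ns) (hφ.comp hns) (fun k => hx _) ⟨C, fun k => hC _⟩
  exact ⟨ms, z, hms, hz⟩

lemma limEssSpectrum_add_iff {domn : ℕ → Submodule ℂ E} {Tn B : ℕ → E →ₗ[ℂ] E}
    (hB : ∀ (φ : ℕ → ℕ) (x : ℕ → E), StrictMono φ → (∀ k, x k ∈ domn (φ k)) →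
      (∀ k, ‖x k‖ = 1) → WeakTendsto x 0 → Tendsto (fun k => B (φ k) (x k)) atTop (𝓝 0))
    (lam : ℂ) : LimEssSpectrum domn (fun n => Tn n + B n) lam ↔ LimEssSpectrum domn Tn lam := by
  refine exists₂_congr fun φ x => ?_
  refine ⟨fun ⟨hφ, hdom, hnorm, hw, ht⟩ => ⟨hφ, hdom, hnorm, hw, ?_⟩,
    fun ⟨hφ, hdom, hnorm, hw, ht⟩ => ⟨hφ, hdom, hnorm, hw, ?_⟩⟩
  all_goals
    have hBx := hB φ x hφ hdom hnorm hw
    rw [← tendsto_zero_iff_norm_tendsto_zero] at ht ⊢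
  · simpa [add_sub_right_comm] using ht.sub hBx
  · simpa [add_sub_right_comm] using ht.add hBx

end

theorem stmt8_general
    (Hsp : Submodule ℂ H₀)
    (Hn domn : ℕ → Submodule ℂ H₀) (Tn : ℕ → H₀ →ₗ[ℂ] H₀)
    (hTn : ∀ n, ActsIn (Hn n) (domn n) (Tn n))
    (Pn : ℕ → H₀ →L[ℂ] H₀)
    (hPn : ∀ n, IsOrthProj (Hn n) (Pn n))
    (B : ℕ → H₀ →L[ℂ] H₀)
    (hB : ∀ n, ∀ x ∈ Hn n, B n x ∈ Hn n)
    (hdc : DiscretelyCompact Hsp Hn B)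
    (hadj : StrongConvSeq (fun n => (ContinuousLinearMap.adjoint (B n)).comp (Pn n))) :
    {lam : ℂ | LimEssSpectrum domn (fun n => Tn n + (B n : H₀ →ₗ[ℂ] H₀)) lam}
      = {lam : ℂ | LimEssSpectrum domn Tn lam} := by
  ext lam
  exact limEssSpectrum_add_iff (B := fun n => (B n : H₀ →ₗ[ℂ] H₀))
    (fun _ _ hφ hdom hnorm hw =>
      hdc.tendsto_apply_zero hPn hB hadj hφ (fun k => (hTn _).1 (hdom k))
        (fun k => (hnorm k).le) hw) lam

theorem stmt8 [TopologicalSpace.SeparableSpace H₀]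
    (Hsp : Submodule ℂ H₀)
    (hHcl : IsClosed ((Hsp : Set H₀)))
    (Hn domn : ℕ → Submodule ℂ H₀) (Tn : ℕ → H₀ →ₗ[ℂ] H₀)
    (hHncl : ∀ n, IsClosed ((Hn n : Set H₀)))
    (hTn : ∀ n, ActsIn (Hn n) (domn n) (Tn n))
    (hTncl : ∀ n, IsClosedOp (domn n) (Tn n))
    (P : H₀ →L[ℂ] H₀) (Pn : ℕ → H₀ →L[ℂ] H₀)
    (hP : IsOrthProj Hsp P) (hPn : ∀ n, IsOrthProj (Hn n) (Pn n))
    (hPconv : ∀ y : H₀, Tendsto (fun n => Pn n y) atTop (nhds (P y)))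
    (B : ℕ → H₀ →L[ℂ] H₀)
    (hB : ∀ n, ∀ x ∈ Hn n, B n x ∈ Hn n)
    (hdc : DiscretelyCompact Hsp Hn B)
    (hadj : StrongConvSeq (fun n => (ContinuousLinearMap.adjoint (B n)).comp (Pn n))) :
    {lam : ℂ | LimEssSpectrum domn (fun n => Tn n + (B n : H₀ →ₗ[ℂ] H₀)) lam}
      = {lam : ℂ | LimEssSpectrum domn Tn lam} :=
  stmt8_general Hsp Hn domn Tn hTn Pn hPn B hB hdc hadj
end
end

section
/- If T_n converges to T in generalised strong resolvent sense, then the approximate point spectrum of T is contained in the limiting approximate point spectrum of (T_n). -/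
open Filter Topology

noncomputable section

variable {H₀ : Type} [NormedAddCommGroup H₀] [InnerProductSpace ℂ H₀] [CompleteSpace H₀]

/-!
If `x ∈ dom T` is a unit vector with `(T - λ) x` small, put `y = (T - λ₀) x`. Since the resolvents
vanish on the orthogonal complements, `uₙ = (Tₙ - λ₀)⁻¹ y` satisfies `(Tₙ - λ₀) uₙ = Pₙ y`; hence
`uₙ → x` and `(Tₙ - λ) uₙ = Pₙ y + (λ₀ - λ) uₙ → (T - λ) x`, so the normalised `uₙ` are approximate
eigenvectors of `Tₙ` for all large `n`. A diagonal choice over a sequence of tolerances `ε → 0`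
gives the required subsequence.
-/

section

omit [CompleteSpace H₀]

namespace InResolvent

variable {Hsp dom : Submodule ℂ H₀} {T : H₀ →ₗ[ℂ] H₀} {lam : ℂ} {R P : H₀ →L[ℂ] H₀}

theorem apply_orthProj (hR : InResolvent Hsp dom T lam R) (hP : IsOrthProj Hsp P) (y : H₀) :
    R (P y) = R y := by
  have h := hR.2.2 _ (hP y).2
  rw [map_sub, sub_eq_zero] at h
  exact h.symm

theorem mem_dom_and_sub_smul_apply (hR : InResolvent Hsp dom T lam R) (hP : IsOrthProj Hsp P)
    (y : H₀) : R y ∈ dom ∧ T (R y) - lam • R y = P y := by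
  rw [← hR.apply_orthProj hP y]
  exact hR.1 _ (hP y).1

theorem orthProj_sub_smul (hR : InResolvent Hsp dom T lam R) (hP : IsOrthProj Hsp P) {x : H₀}
    (hx : x ∈ dom) : P (T x - lam • x) = T x - lam • x := by
  have h := (hR.mem_dom_and_sub_smul_apply hP (T x - lam • x)).2
  rwa [hR.2.1 x hx, eq_comm] at h

end InResolvent

theorem ApproxSpectrum.pseudoAppSpectrum {dom : Submodule ℂ H₀} {T : H₀ →ₗ[ℂ] H₀} {lam : ℂ}
    (h : ApproxSpectrum dom T lam) {ε : ℝ} (hε : 0 < ε) : PseudoAppSpectrum dom T ε lam := by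
  obtain ⟨x, hx, hx1, hlim⟩ := h
  obtain ⟨k, hk⟩ := (hlim.eventually (gt_mem_nhds hε)).exists
  exact ⟨x k, hx k, hx1 k, hk⟩

theorem limApproxSpectrum_of_frequently_pseudoAppSpectrum {domn : ℕ → Submodule ℂ H₀}
    {Tn : ℕ → H₀ →ₗ[ℂ] H₀} {lam : ℂ}
    (h : ∀ ε > 0, ∃ᶠ n in atTop, PseudoAppSpectrum (domn n) (Tn n) ε lam) :
    LimApproxSpectrum domn Tn lam := by
  obtain ⟨φ, hφ, hφx⟩ := extraction_forall_of_frequently fun k : ℕ =>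
    h (1 / ((k : ℝ) + 1)) Nat.one_div_pos_of_nat
  choose x hx hx1 hxε using hφx
  exact ⟨φ, x, hφ, hx, hx1, squeeze_zero (fun _ => norm_nonneg _) (fun k => (hxε k).le)
    tendsto_one_div_add_atTop_nhds_zero_nat⟩

theorem eventually_pseudoAppSpectrum_of_tendsto {domn : ℕ → Submodule ℂ H₀}
    {Tn : ℕ → H₀ →ₗ[ℂ] H₀} {lam : ℂ} {ε : ℝ} {u w : ℕ → H₀} {x w₀ : H₀}
    (huw : ∀ᶠ n in atTop, u n ∈ domn n ∧ Tn n (u n) - lam • u n = w n)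
    (hu : Tendsto u atTop (𝓝 x)) (hx : ‖x‖ = 1) (hw : Tendsto w atTop (𝓝 w₀)) (hw₀ : ‖w₀‖ < ε) :
    ∀ᶠ n in atTop, PseudoAppSpectrum (domn n) (Tn n) ε lam := by
  have hnorm : Tendsto (fun n => ‖u n‖) atTop (𝓝 1) := hx ▸ hu.norm
  have hratio : Tendsto (fun n => ‖u n‖⁻¹ * ‖w n‖) atTop (𝓝 ‖w₀‖) := by
    simpa using (hnorm.inv₀ one_ne_zero).mul hw.norm
  filter_upwards [huw, hnorm.eventually_ne one_ne_zero, hratio.eventually (gt_mem_nhds hw₀)]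
    with n ⟨hdom, heq⟩ hne hlt
  refine ⟨(‖u n‖⁻¹ : ℂ) • u n, Submodule.smul_mem _ _ hdom,
    norm_smul_inv_norm (norm_ne_zero_iff.mp hne), ?_⟩
  rwa [map_smul, smul_comm lam, ← smul_sub, heq, norm_smul, norm_inv, Complex.norm_real,
    norm_norm]

theorem GSRConv.eventually_pseudoAppSpectrum {Hsp dom : Submodule ℂ H₀} {T : H₀ →ₗ[ℂ] H₀}
    {Hn domn : ℕ → Submodule ℂ H₀} {Tn : ℕ → H₀ →ₗ[ℂ] H₀} {P : H₀ →L[ℂ] H₀}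
    {Pn : ℕ → H₀ →L[ℂ] H₀} (hconv : GSRConv Hsp dom T Hn domn Tn) (hP : IsOrthProj Hsp P)
    (hPn : ∀ n, IsOrthProj (Hn n) (Pn n))
    (hPconv : ∀ y : H₀, Tendsto (fun n => Pn n y) atTop (𝓝 (P y))) {lam : ℂ} {ε : ℝ}
    (h : PseudoAppSpectrum dom T ε lam) :
    ∀ᶠ n in atTop, PseudoAppSpectrum (domn n) (Tn n) ε lam := by
  obtain ⟨n₀, lam₀, R, Rn, hR, hRn, hRconv⟩ := hconv
  obtain ⟨x, hx, hx1, hxε⟩ := h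
  have hu : Tendsto (fun n => Rn n (T x - lam₀ • x)) atTop (𝓝 x) := by
    simpa only [hR.2.1 x hx] using hRconv (T x - lam₀ • x)
  have hw := (hPconv (T x - lam₀ • x)).add (hu.const_smul (lam₀ - lam))
  rw [hR.orthProj_sub_smul hP hx, show T x - lam₀ • x + (lam₀ - lam) • x = T x - lam • x by module]
    at hw
  refine eventually_pseudoAppSpectrum_of_tendsto ?_ hu hx1 hw hxε
  filter_upwards [eventually_ge_atTop n₀] with n hn
  obtain ⟨hdom, heq⟩ := (hRn n hn).mem_dom_and_sub_smul_apply (hPn n) (T x - lam₀ • x)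
  exact ⟨hdom, by rw [← heq]; module⟩

end

theorem stmt10_general
    (Hsp dom : Submodule ℂ H₀) (T : H₀ →ₗ[ℂ] H₀)
    (Hn domn : ℕ → Submodule ℂ H₀) (Tn : ℕ → H₀ →ₗ[ℂ] H₀)
    (P : H₀ →L[ℂ] H₀) (Pn : ℕ → H₀ →L[ℂ] H₀)
    (hP : IsOrthProj Hsp P) (hPn : ∀ n, IsOrthProj (Hn n) (Pn n))
    (hPconv : ∀ y : H₀, Tendsto (fun n => Pn n y) atTop (nhds (P y)))
    (hconv : GSRConv Hsp dom T Hn domn Tn) (lam : ℂ)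
    (hlam : ApproxSpectrum dom T lam) :
    LimApproxSpectrum domn Tn lam :=
  limApproxSpectrum_of_frequently_pseudoAppSpectrum fun _ hε =>
    (hconv.eventually_pseudoAppSpectrum hP hPn hPconv (hlam.pseudoAppSpectrum hε)).frequently

theorem stmt10 [TopologicalSpace.SeparableSpace H₀]
    (Hsp dom : Submodule ℂ H₀) (T : H₀ →ₗ[ℂ] H₀)
    (hHcl : IsClosed ((Hsp : Set H₀)))
    (hT : ActsIn Hsp dom T) (hTcl : IsClosedOp dom T)
    (Hn domn : ℕ → Submodule ℂ H₀) (Tn : ℕ → H₀ →ₗ[ℂ] H₀)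
    (hHncl : ∀ n, IsClosed ((Hn n : Set H₀)))
    (hTn : ∀ n, ActsIn (Hn n) (domn n) (Tn n))
    (hTncl : ∀ n, IsClosedOp (domn n) (Tn n))
    (P : H₀ →L[ℂ] H₀) (Pn : ℕ → H₀ →L[ℂ] H₀)
    (hP : IsOrthProj Hsp P) (hPn : ∀ n, IsOrthProj (Hn n) (Pn n))
    (hPconv : ∀ y : H₀, Tendsto (fun n => Pn n y) atTop (nhds (P y)))
    (hconv : GSRConv Hsp dom T Hn domn Tn) (lam : ℂ)
    (hlam : ApproxSpectrum dom T lam) :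
    LimApproxSpectrum domn Tn lam :=
  stmt10_general Hsp dom T Hn domn Tn P Pn hP hPn hPconv hconv lam hlam

end
end
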